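/- arXiv:1205.3673 — 7 statements merged into one kernel-verified Lean document; each statement's English description precedes it below -/
import Mathlib

section
/- For every n ≥ 1, the matrix M := Σ_{0 ≤ k < n} B(k,k), whose (j,m) entry equals exp(2πi·j·(m−j)/n), satisfies M · M† = n·I; in particular n^{-1/2} M is a unitary matrix. -/
open Matrix Complex

/-- The Fourier basis matrix `B(k,l)`: its `(j,m)` entry is `exp(2πi·j·l/n)` when
`m ≡ j + k (mod n)` and `0` otherwise. -/
noncomputable def fourierB (n : ℕ) (k l : Fin n) : Matrix (Fin n) (Fin n) ℂ :=
  Matrix.of fun j m =>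
    if m = j + k then Complex.exp (2 * Real.pi * Complex.I * (j.val : ℂ) * (l.val : ℂ) / (n : ℂ))
    else 0


noncomputable def Efun (n : ℕ) (a : ℤ) : ℂ := Complex.exp (2 * Real.pi * Complex.I * (a : ℂ) / (n : ℂ))

lemma Efun_add (n : ℕ) (a b : ℤ) : Efun n (a + b) = Efun n a * Efun n b := by
  simp only [Efun, ← Complex.exp_add]
  congr 1
  push_cast
  ring

lemma Efun_int_mul (n : ℕ) (hn : 1 ≤ n) (t : ℤ) : Efun n ((n : ℤ) * t) = 1 := by
  have hn' : (n : ℂ) ≠ 0 := by exact_mod_cast Nat.pos_of_ne_zero (by omega) |>.ne'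
  have : (2 : ℂ) * Real.pi * Complex.I * ((((n:ℤ) * t : ℤ)) : ℂ) / (n : ℂ)
      = (t : ℂ) * (2 * Real.pi * Complex.I) := by
    push_cast
    field_simp
  rw [Efun, this, Complex.exp_int_mul_two_pi_mul_I]

lemma Efun_congr (n : ℕ) (hn : 1 ≤ n) {a b : ℤ} (h : a ≡ b [ZMOD n]) :
    Efun n a = Efun n b := by
  obtain ⟨t, ht⟩ : (n:ℤ) ∣ b - a := Int.ModEq.dvd h
  have : b = a + (n : ℤ) * t := by linarith
  rw [this, Efun_add, Efun_int_mul n hn, mul_one]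

lemma Efun_conj (n : ℕ) (a : ℤ) : (starRingEnd ℂ) (Efun n a) = Efun n (-a) := by
  have h1 : (2*(Real.pi:ℂ)*Complex.I*(a:ℂ)/(n:ℂ)) = ((2*Real.pi*a/n : ℝ):ℂ) * Complex.I := by
    push_cast; ring
  have h2 : (2*(Real.pi:ℂ)*Complex.I*((-a:ℤ):ℂ)/(n:ℂ)) = ((-(2*Real.pi*a/n) : ℝ):ℂ) * Complex.I := by
    push_cast; ring
  rw [Efun, Efun, h1, h2, ← Complex.exp_conj]
  congr 1
  simp only [_root_.map_mul, Complex.conj_ofReal, Complex.conj_I, Complex.ofReal_neg]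
  ring

lemma Efun_sum (n : ℕ) (hn : 1 ≤ n) (a : ℤ) :
    ∑ m : Fin n, Efun n (a * m.val) = if (n : ℤ) ∣ a then (n : ℂ) else 0 := by
  have hpow : ∀ m : ℕ, Efun n (a * m) = (Efun n a) ^ m := by
    intro m
    rw [Efun, Efun, ← Complex.exp_nat_mul]
    congr 1
    push_cast
    ring
  split_ifs with h
  · have : ∀ m : Fin n, Efun n (a * m.val) = 1 := fun m => by
      obtain ⟨t, rfl⟩ := h
      have : (n:ℤ) * t * (m.val : ℤ) = (n:ℤ) * (t * m.val) := by ring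
      rw [this, Efun_int_mul n hn]
    simp [this]
  · have hz : Efun n a ≠ 1 := by
      intro hc
      apply h
      rw [Efun, Complex.exp_eq_one_iff] at hc
      obtain ⟨k, hk⟩ := hc
      have hn' : (n : ℂ) ≠ 0 := by exact_mod_cast (Nat.pos_of_ne_zero (by omega)).ne'
      have hI : (2 : ℂ) * Real.pi * Complex.I ≠ 0 := by
        simp [Real.pi_ne_zero, Complex.I_ne_zero]
      have h3 : (2*(Real.pi:ℂ)*Complex.I) * ((a:ℂ)/n) = (2*(Real.pi:ℂ)*Complex.I) * k := by
        linear_combination hk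
      have h4 := mul_left_cancel₀ hI h3
      rw [div_eq_iff hn'] at h4
      have key : a = k * n := by exact_mod_cast h4
      exact ⟨k, by rw [key, mul_comm]⟩
    calc ∑ m : Fin n, Efun n (a * m.val) = ∑ m : Fin n, (Efun n a) ^ m.val := by
          simp [hpow]
      _ = ∑ i ∈ Finset.range n, (Efun n a) ^ i := by
          rw [Finset.sum_range fun i => (Efun n a)^i]
      _ = 0 := by
          rw [geom_sum_eq hz]
          have : (Efun n a) ^ n = 1 := by
            rw [← hpow, mul_comm, Efun_int_mul n hn]
          simp [this]

lemma fin_sub_modeq (n : ℕ) [NeZero n] (m j : Fin n) :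
    (((m - j : Fin n).val : ℤ)) ≡ (m.val : ℤ) - (j.val : ℤ) [ZMOD n] := by
  have h2 : ((m - j : Fin n).val + j.val) % n = m.val := by
    rw [← Fin.val_add, sub_add_cancel]
  have h3 := Nat.div_add_mod ((m - j : Fin n).val + j.val) n
  rw [h2] at h3
  apply Int.modEq_iff_dvd.mpr
  refine ⟨-((((m - j : Fin n).val + j.val) / n : ℕ) : ℤ), ?_⟩
  have h3' : (n : ℤ) * ((((m - j : Fin n).val + j.val) / n : ℕ) : ℤ) + (m.val : ℤ)
      = ((m - j : Fin n).val : ℤ) + (j.val : ℤ) := by exact_mod_cast h3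
  linarith

theorem fourierB_dft (n : ℕ) (hn : 1 ≤ n) :
    let M : Matrix (Fin n) (Fin n) ℂ := ∑ k : Fin n, fourierB n k k
    (∀ j m : Fin n,
        M j m = Complex.exp (2 * Real.pi * Complex.I * (j.val : ℂ) * (((m - j : Fin n) : ℕ) : ℂ) / (n : ℂ))) ∧
      M * M.conjTranspose = (n : ℂ) • 1 ∧
        (Real.sqrt n : ℂ)⁻¹ • M ∈ Matrix.unitaryGroup (Fin n) ℂ := by
  intro M
  haveI : NeZero n := ⟨by omega⟩
  have hn0 : (n : ℂ) ≠ 0 := by exact_mod_cast (Nat.pos_of_ne_zero (by omega)).ne'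
  have hM : ∀ j m : Fin n, M j m = Efun n ((j.val : ℤ) * ((m - j : Fin n).val : ℤ)) := by
    intro j m
    show (∑ k : Fin n, fourierB n k k) j m = _
    rw [Matrix.sum_apply]
    rw [Finset.sum_eq_single (m - j)]
    · rw [fourierB]
      simp only [Matrix.of_apply, add_sub_cancel, if_pos rfl]
      rw [Efun]
      congr 1
      push_cast
      ring
    · intro k _ hk
      rw [fourierB]
      simp only [Matrix.of_apply]
      rw [if_neg]
      intro h
      exact hk (by rw [h]; simp)
    · intro h
      exact absurd (Finset.mem_univ _) h
  have hM' : ∀ j m : Fin n,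
      M j m = Complex.exp (2 * Real.pi * Complex.I * (j.val : ℂ) * (((m - j : Fin n) : ℕ) : ℂ) / (n : ℂ)) := by
    intro j m
    rw [hM j m, Efun]
    congr 1
    push_cast
    ring
  have hmul : M * M.conjTranspose = (n : ℂ) • 1 := by
    ext j j'
    rw [Matrix.mul_apply, Matrix.smul_apply]
    have hterm : ∀ m : Fin n,
        M j m * M.conjTranspose m j'
          = Efun n (((j.val : ℤ) - j'.val) * m.val) * Efun n ((j'.val : ℤ)^2 - (j.val : ℤ)^2) := by
      intro m
      rw [Matrix.conjTranspose_apply, hM j m, hM j' m, star_def, Efun_conj, ← Efun_add,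
        ← Efun_add]
      apply Efun_congr n hn
      have h1 := Int.ModEq.mul_left (j.val : ℤ) (fin_sub_modeq n m j)
      have h2 := Int.ModEq.mul_left (-(j'.val : ℤ)) (fin_sub_modeq n m j')
      have h3 := h1.add h2
      have e1 : (j.val : ℤ) * ((m - j : Fin n).val : ℤ) + -((j'.val : ℤ) * ((m - j' : Fin n).val : ℤ))
          = (j.val : ℤ) * ((m - j : Fin n).val : ℤ) + (-(j'.val : ℤ)) * ((m - j' : Fin n).val : ℤ) := by
        ring
      have e2 : (j.val : ℤ) * ((m.val : ℤ) - j.val) + (-(j'.val : ℤ)) * ((m.val : ℤ) - j'.val)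
          = ((j.val : ℤ) - j'.val) * m.val + ((j'.val : ℤ)^2 - (j.val : ℤ)^2) := by ring
      rw [e1, ← e2]
      exact h3
    rw [Finset.sum_congr rfl fun m _ => hterm m, ← Finset.sum_mul, Efun_sum n hn]
    by_cases h : j = j'
    · subst h
      simp [Matrix.one_apply, Efun]
    · have hd : ¬ ((n : ℤ) ∣ ((j.val : ℤ) - j'.val)) := by
        intro hdvd
        have hne : (j.val : ℤ) - j'.val ≠ 0 := by
          intro hz
          exact h (Fin.ext (by omega))
        have habs : |(j.val : ℤ) - j'.val| < n := by
          have := j.isLt; have := j'.isLt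
          rw [abs_lt]; omega
        exact hne (Int.eq_zero_of_abs_lt_dvd hdvd habs)
      rw [if_neg hd, zero_mul, Matrix.one_apply_ne h, smul_zero]
  refine ⟨hM', hmul, ?_⟩
  rw [Matrix.mem_unitaryGroup_iff]
  have hc : ((Real.sqrt n : ℂ))⁻¹ * ((Real.sqrt n : ℂ))⁻¹ = (n : ℂ)⁻¹ := by
    rw [← mul_inv]
    congr 1
    rw [← Complex.ofReal_mul, Real.mul_self_sqrt (Nat.cast_nonneg n)]
    push_cast
    ring
  calc ((Real.sqrt n : ℂ))⁻¹ • M * star (((Real.sqrt n : ℂ))⁻¹ • M)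
      = ((Real.sqrt n : ℂ))⁻¹ • M * (star ((Real.sqrt n : ℂ))⁻¹ • M.conjTranspose) := by
        rw [Matrix.star_eq_conjTranspose, Matrix.conjTranspose_smul]
    _ = (((Real.sqrt n : ℂ))⁻¹ * ((Real.sqrt n : ℂ))⁻¹) • (M * M.conjTranspose) := by
        rw [star_inv₀, Complex.star_def, Complex.conj_ofReal]
        rw [Matrix.mul_smul, Matrix.smul_mul, smul_smul]
    _ = 1 := by
        rw [hc, hmul, smul_smul, inv_mul_cancel₀ hn0, one_smul]
end

section
/- Let U be an n×n unitary matrix (U·U† = I) with entries u_{j,l}. Then the n² matrices Q_U(k,l), 0 ≤ k, l < n, form an orthonormal family: ⟨Q_U(k,l), Q_U(k',l')⟩ = 1 if (k,l) = (k',l') and 0 otherwise, where ⟨A, M⟩ := Tr(A M†). -/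
open Matrix Complex

/-- The matrix `Q_U(k,l)`: its `(j,m)` entry is `u_{j,l}` when `m ≡ j + k (mod n)`
and `0` otherwise. -/
def matQ {n : ℕ} (U : Matrix (Fin n) (Fin n) ℂ) (k l : Fin n) : Matrix (Fin n) (Fin n) ℂ :=
  Matrix.of fun j m => if m = j + k then U j l else 0

/-- The trace inner product `⟨A, M⟩ = Tr(A M†)` on square complex matrices. -/
noncomputable def minner {n : ℕ} (A M : Matrix (Fin n) (Fin n) ℂ) : ℂ :=
  (A * M.conjTranspose).trace

theorem matQ_orthonormal (n : ℕ) (U : Matrix (Fin n) (Fin n) ℂ)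
    (hU : U * U.conjTranspose = 1) (k l k' l' : Fin n) :
    minner (matQ U k l) (matQ U k' l') = if (k, l) = (k', l') then 1 else 0 := by
  have hU' : U.conjTranspose * U = 1 := mul_eq_one_comm.mp hU
  have key : ∀ a b : Fin n, (U.conjTranspose * U) a b = if a = b then 1 else 0 := by
    intro a b; rw [hU', one_apply]
  simp only [minner, matQ, Matrix.trace, Matrix.diag, mul_apply, conjTranspose_apply,
    of_apply, apply_ite star, star_zero, ite_mul, mul_ite, mul_zero, zero_mul,
    Finset.sum_ite_eq' Finset.univ, Finset.mem_univ, if_true]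
  by_cases hk : k = k'
  · subst hk
    simp only [if_pos rfl, Prod.mk.injEq, true_and]
    have := key l' l
    rw [mul_apply] at this
    simp only [conjTranspose_apply] at this
    simp only [if_true]
    by_cases hl : l = l'
    · subst hl
      rw [if_pos rfl] at this ⊢
      rw [← this]
      exact Finset.sum_congr rfl fun j _ => mul_comm _ _
    · rw [if_neg hl, ← Finset.sum_congr rfl fun j _ => mul_comm _ _, this,
        if_neg (fun h => hl h.symm)]
  · have : ∀ j : Fin n, ¬ (j + k' = j + k) := fun j h => hk (add_left_cancel h).symm
    simp only [this, if_false, Finset.sum_const_zero, Prod.mk.injEq, hk, false_and, if_false]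
end

section
/- Let U be an n×n unitary matrix (U·U† = I). Then the family {Q_U(k,l) : 0 ≤ k, l < n} spans M_n(ℂ); indeed every n×n complex matrix A satisfies A = Σ_{0 ≤ k,l < n} ⟨A, Q_U(k,l)⟩ · Q_U(k,l). -/
open Matrix Complex

lemma minner_matQ {n : ℕ} (U A : Matrix (Fin n) (Fin n) ℂ) (k l : Fin n) :
    minner A (matQ U k l) = ∑ j, A j (j + k) * (starRingEnd ℂ) (U j l) := by
  unfold minner matQ
  simp [Matrix.trace, Matrix.mul_apply, Matrix.conjTranspose_apply, Matrix.diag,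
    apply_ite (starRingEnd ℂ), mul_ite, mul_zero]

lemma expansion_entry {n : ℕ} [NeZero n] (U : Matrix (Fin n) (Fin n) ℂ)
    (hU : U * U.conjTranspose = 1) (A : Matrix (Fin n) (Fin n) ℂ) :
    A = ∑ k : Fin n, ∑ l : Fin n, minner A (matQ U k l) • matQ U k l := by
  have h1 : ∀ p j, (∑ l, U p l * (starRingEnd ℂ) (U j l)) = if p = j then 1 else 0 := by
    intro p j
    have := congrFun (congrFun hU p) j
    simpa [Matrix.mul_apply, Matrix.conjTranspose_apply, Matrix.one_apply] using this
  ext p q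
  simp only [minner_matQ]
  simp only [Matrix.sum_apply, Matrix.smul_apply, matQ, Matrix.of_apply, smul_eq_mul,
    mul_ite, mul_zero]
  have hcond : ∀ k : Fin n, (q = p + k) ↔ (k = q - p) := by
    intro k
    constructor
    · rintro rfl; simp
    · rintro rfl; rw [add_comm, sub_add_cancel]
  have step1 : ∀ k : Fin n,
      (∑ l, if q = p + k then (∑ j, A j (j + k) * (starRingEnd ℂ) (U j l)) * U p l else 0)
      = if k = q - p then ∑ l, (∑ j, A j (j + k) * (starRingEnd ℂ) (U j l)) * U p l else 0 := by
    intro k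
    simp only [hcond k]
    split_ifs <;> simp
  rw [Finset.sum_congr rfl fun k _ => step1 k, Finset.sum_ite_eq' Finset.univ]
  simp only [Finset.mem_univ, if_true]
  simp only [Finset.sum_mul]
  rw [Finset.sum_comm]
  have : ∀ j, (∑ l, A j (j + (q - p)) * (starRingEnd ℂ) (U j l) * U p l)
      = A j (j + (q - p)) * (if p = j then 1 else 0) := by
    intro j
    rw [← h1 p j, Finset.mul_sum]
    apply Finset.sum_congr rfl
    intro l _
    ring
  rw [Finset.sum_congr rfl fun j _ => this j]
  simp [add_comm, sub_add_cancel]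

theorem matQ_expansion (n : ℕ) (U : Matrix (Fin n) (Fin n) ℂ)
    (hU : U * U.conjTranspose = 1) :
    Submodule.span ℂ (Set.range fun p : Fin n × Fin n => matQ U p.1 p.2) = ⊤ ∧
      ∀ A : Matrix (Fin n) (Fin n) ℂ,
        A = ∑ k : Fin n, ∑ l : Fin n, minner A (matQ U k l) • matQ U k l := by
  have hexp : ∀ A : Matrix (Fin n) (Fin n) ℂ,
      A = ∑ k : Fin n, ∑ l : Fin n, minner A (matQ U k l) • matQ U k l := by
    rcases Nat.eq_zero_or_pos n with rfl | hn
    · intro A; ext p q; exact absurd p.2 (Nat.not_lt_zero _)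
    · have : NeZero n := ⟨hn.ne'⟩
      exact expansion_entry U hU
  refine ⟨?_, hexp⟩
  rw [eq_top_iff]
  intro A _
  rw [hexp A]
  refine Submodule.sum_mem _ fun k _ => Submodule.sum_mem _ fun l _ =>
    Submodule.smul_mem _ _ (Submodule.subset_span ⟨(k, l), rfl⟩)
end

section
/- Let H be an n×n Hadamard matrix, i.e., every entry of H is 1 or −1 and Hᵀ·H = n·I. Then for all indices 0 ≤ k, l, k', l' < n one has ⟨Q_H(k,l), Q_H(k',l')⟩ = n if (k,l) = (k',l') and 0 otherwise, where ⟨A, M⟩ := Tr(A M†); in particular the n² matrices Q_H(k,l) form a complete orthogonal basis of M_n(ℂ). -/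
open Matrix Complex

theorem matQ_hadamard_orthogonal (n : ℕ) (H : Matrix (Fin n) (Fin n) ℝ)
    (hEnt : ∀ i j, H i j = 1 ∨ H i j = -1)
    (hH : H.transpose * H = (n : ℝ) • 1) :
    (∀ k l k' l' : Fin n,
        minner (matQ (H.map Complex.ofReal) k l) (matQ (H.map Complex.ofReal) k' l') =
          if (k, l) = (k', l') then (n : ℂ) else 0) ∧
      Submodule.span ℂ
          (Set.range fun p : Fin n × Fin n => matQ (H.map Complex.ofReal) p.1 p.2) = ⊤ := by
  have hCol : ∀ l l' : Fin n, (∑ j, H j l * H j l') = if l = l' then (n:ℝ) else 0 := by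
    intro l l'
    have := congrFun (congrFun hH l) l'
    simp [Matrix.mul_apply, Matrix.transpose_apply, Matrix.one_apply, mul_comm] at this
    simpa [mul_comm] using this
  constructor
  · intro k l k' l'
    simp only [minner, Matrix.trace, Matrix.diag_apply, Matrix.mul_apply,
      Matrix.conjTranspose_apply, matQ, Matrix.of_apply, Matrix.map_apply]
    have hinner : ∀ x : Fin n,
        (∑ x1, (if x1 = x + k then ((H x l : ℂ)) else 0) *
          star (if x1 = x + k' then ((H x l' : ℂ)) else 0)) =
        (H x l : ℂ) * star (if x + k = x + k' then (H x l' : ℂ) else 0) := by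
      intro x
      rw [Finset.sum_eq_single (x + k)]
      · simp
      · intro b _ hb; simp [hb]
      · simp
    simp only [hinner]
    by_cases hk : k = k'
    · subst hk
      simp only [if_pos rfl, Prod.mk.injEq, true_and, Complex.star_def, Complex.conj_ofReal, if_true]
      rw [show (∑ x, ((H x l : ℂ) * (H x l' : ℂ))) = ((∑ x, H x l * H x l' : ℝ) : ℂ) by
        push_cast; rfl]
      simp [hCol l l', apply_ite Complex.ofReal]
    · have hne : ∀ x : Fin n, x + k ≠ x + k' := by
        intro x h
        haveI : NeZero n := NeZero.of_pos x.pos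
        exact hk (add_left_cancel h)
      simp [hne, Prod.ext_iff, hk]
  · rcases Nat.eq_zero_or_pos n with h0 | hn
    · subst h0
      rw [Submodule.eq_top_iff']
      intro x
      have : x = 0 := Subsingleton.elim x 0
      simp [this]
    · haveI : NeZero n := ⟨hn.ne'⟩
      have hn' : (n : ℝ) ≠ 0 := Nat.cast_ne_zero.mpr hn.ne'
      -- row orthogonality
      have hRow : ∀ i j : Fin n, (∑ l, H i l * H j l) = if i = j then (n:ℝ) else 0 := by
        have h1 : H.transpose * ((n:ℝ)⁻¹ • H) = 1 := by
          rw [Matrix.mul_smul, hH, smul_smul, inv_mul_cancel₀ hn', one_smul]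
        have h2 : ((n:ℝ)⁻¹ • H) * H.transpose = 1 := mul_eq_one_comm.mp
          (by rw [← Matrix.transpose_transpose H] ; exact h1)
        intro i j
        have h3 : H * H.transpose = (n:ℝ) • 1 := by
          have := congrArg (fun M => (n:ℝ) • M) h2
          simpa [Matrix.smul_mul, smul_smul, mul_inv_cancel₀ hn'] using this
        have := congrFun (congrFun h3 i) j
        simpa [Matrix.mul_apply, Matrix.transpose_apply, Matrix.one_apply] using this
      rw [Submodule.eq_top_iff']
      intro x
      have hstd : ∀ i m : Fin n, Matrix.single i m (1:ℂ) ∈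
          Submodule.span ℂ
            (Set.range fun p : Fin n × Fin n => matQ (H.map Complex.ofReal) p.1 p.2) := by
        intro i m
        have key : Matrix.single i m (1:ℂ) =
            (n:ℂ)⁻¹ • ∑ l, (H i l : ℂ) • matQ (H.map Complex.ofReal) (m - i) l := by
          ext j m'
          simp only [Matrix.smul_apply, Matrix.sum_apply, matQ, Matrix.of_apply,
            Matrix.map_apply, smul_eq_mul, mul_ite, mul_zero, Finset.sum_ite_irrel,
            Finset.sum_const_zero, Matrix.single]
          by_cases hm : m' = j + (m - i)
          · rw [if_pos hm]
            rw [show (∑ l, ((H i l : ℂ) * (H j l : ℂ))) = ((∑ l, H i l * H j l : ℝ) : ℂ) by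
              push_cast; rfl, hRow i j]
            by_cases hij : i = j
            · subst hij
              have : m' = m := by rw [hm]; simp [add_sub_cancel]
              simp [this, inv_mul_cancel₀ (show (n:ℂ) ≠ 0 from Nat.cast_ne_zero.mpr hn.ne')]
            · have : ¬ (i = j ∧ m = m') := fun h => hij h.1
              simp [hij, this]
          · rw [if_neg hm]
            have : ¬ (i = j ∧ m = m') := by
              rintro ⟨rfl, rfl⟩
              exact hm (by simp)
            simp [this]
        rw [key]
        exact Submodule.smul_mem _ _ (Submodule.sum_mem _ fun l _ =>
          Submodule.smul_mem _ _ (Submodule.subset_span ⟨(m - i, l), rfl⟩))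
      rw [Matrix.matrix_eq_sum_single x]
      refine Submodule.sum_mem _ fun i _ => Submodule.sum_mem _ fun j _ => ?_
      rw [show Matrix.single i j (x i j) = x i j • Matrix.single i j 1 by
        rw [Matrix.smul_single, smul_eq_mul, mul_one]]
      exact Submodule.smul_mem _ _ (hstd i j)
end

section
/- Let H be an n×n Hadamard matrix, i.e., every entry of H is 1 or −1 and Hᵀ·H = n·I. Then every n×n complex matrix A satisfies the expansion A = Σ_{0 ≤ k,l < n} n^{-1} ⟨A, Q_H(k,l)⟩ · Q_H(k,l). -/
open Matrix Complex

theorem matQ_hadamard_expansion (n : ℕ) (H : Matrix (Fin n) (Fin n) ℝ)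
    (hEnt : ∀ i j, H i j = 1 ∨ H i j = -1)
    (hH : H.transpose * H = (n : ℝ) • 1) (A : Matrix (Fin n) (Fin n) ℂ) :
    A = ∑ k : Fin n, ∑ l : Fin n,
          ((n : ℂ)⁻¹ * minner A (matQ (H.map Complex.ofReal) k l)) •
            matQ (H.map Complex.ofReal) k l := by
  rcases Nat.eq_zero_or_pos n with h0 | hn
  · subst h0; exact Subsingleton.elim _ _
  haveI : NeZero n := ⟨hn.ne'⟩
  have hneR : (n : ℝ) ≠ 0 := Nat.cast_ne_zero.mpr hn.ne'
  have hne : (n : ℂ) ≠ 0 := Nat.cast_ne_zero.mpr hn.ne'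
  -- H * Hᵀ = n • 1
  have key : H * H.transpose = (n : ℝ) • 1 := by
    have h1 : ((n:ℝ)⁻¹ • H.transpose) * H = 1 := by
      rw [Matrix.smul_mul, hH, smul_smul, inv_mul_cancel₀ hneR, one_smul]
    have h2 := mul_eq_one_comm.mp h1
    calc H * H.transpose = (n:ℝ) • (H * ((n:ℝ)⁻¹ • H.transpose)) := by
          rw [Matrix.mul_smul, smul_smul, mul_inv_cancel₀ hneR, one_smul]
      _ = (n:ℝ) • 1 := by rw [h2]
  have keyC : ∀ p j : Fin n, ∑ l, (H p l : ℂ) * (H j l : ℂ) = if p = j then (n:ℂ) else 0 := by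
    intro p j
    have h := congrFun (congrFun key p) j
    simp only [Matrix.mul_apply, Matrix.transpose_apply, Matrix.smul_apply, Matrix.one_apply,
      smul_eq_mul] at h
    have h2 : ((∑ l, H p l * H j l : ℝ) : ℂ)
        = ((if p = j then (n:ℝ) * 1 else (n:ℝ) * 0 : ℝ) : ℂ) := by
      rw [h]; split <;> simp
    push_cast [apply_ite Complex.ofReal] at h2
    simpa using h2
  have hQ : ∀ k l, minner A (matQ (H.map Complex.ofReal) k l)
      = ∑ j, A j (j + k) * (H j l : ℂ) := by
    intro k l
    simp only [minner, matQ, Matrix.trace, Matrix.diag, Matrix.mul_apply,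
      Matrix.conjTranspose_apply, Matrix.of_apply, Matrix.map_apply]
    apply Finset.sum_congr rfl
    intro j _
    rw [Finset.sum_eq_single (j + k)]
    · simp [Complex.conj_ofReal]
    · intro m _ hm; simp [hm]
    · simp
  ext p q
  simp only [Matrix.sum_apply, Matrix.smul_apply, smul_eq_mul, hQ]
  simp only [matQ, Matrix.of_apply, Matrix.map_apply]
  rw [Finset.sum_eq_single (q - p)]
  rotate_left
  · intro k _ hk
    have hqk : q ≠ p + k := fun h => hk (by rw [h]; abel)
    simp [hqk]
  · simp
  have hq : p + (q - p) = q := by abel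
  simp only [hq, eq_self_iff_true, if_true]
  have step1 : ∀ l : Fin n, (n:ℂ)⁻¹ * (∑ j, A j (j + (q-p)) * (H j l:ℂ)) * (H p l:ℂ)
      = ∑ j, (n:ℂ)⁻¹ * (A j (j + (q-p)) * ((H j l:ℂ) * (H p l:ℂ))) := by
    intro l
    rw [Finset.mul_sum, Finset.sum_mul]
    apply Finset.sum_congr rfl
    intros; ring
  rw [Finset.sum_congr rfl fun l _ => step1 l, Finset.sum_comm]
  have step2 : ∀ j : Fin n, (∑ l, (n:ℂ)⁻¹ * (A j (j + (q-p)) * ((H j l:ℂ) * (H p l:ℂ))))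
      = if j = p then A p q else 0 := by
    intro j
    rw [← Finset.mul_sum, ← Finset.mul_sum, keyC j p]
    rcases eq_or_ne j p with h | h
    · subst h
      rw [if_pos rfl, if_pos rfl, hq]
      field_simp
    · simp [h]
  rw [Finset.sum_congr rfl fun j _ => step2 j]
  simp
end

section
/- Let H be an n×n Hadamard matrix, i.e., every entry of H is 1 or −1 and Hᵀ·H = n·I. Then the set G = {Q_H(k,l) : 0 ≤ k, l < n} is 2-pseudo-closed under matrix multiplication: every element A of G satisfies A^{⋆3} = A (entrywise cube), and for all A, B ∈ G there exists a diagonal n×n matrix D with D² = I such that D·(A·B) ∈ G. -/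
open Matrix Complex

/-- Entrywise `m`-th power of a matrix, written `A^{⋆m}` in the paper. -/
def hadamardPow {n : ℕ} (A : Matrix (Fin n) (Fin n) ℂ) (m : ℕ) : Matrix (Fin n) (Fin n) ℂ :=
  Matrix.of fun i j => (A i j) ^ m

theorem matQ_hadamard_2_pseudoClosed (n : ℕ) (H : Matrix (Fin n) (Fin n) ℝ)
    (hEnt : ∀ i j, H i j = 1 ∨ H i j = -1)
    (hH : H.transpose * H = (n : ℝ) • 1) :
    (∀ k l : Fin n, hadamardPow (matQ (H.map Complex.ofReal) k l) 3 = matQ (H.map Complex.ofReal) k l) ∧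
      ∀ k₁ l₁ k₂ l₂ : Fin n, ∃ D : Matrix (Fin n) (Fin n) ℂ,
        D.IsDiag ∧ D ^ 2 = 1 ∧
          D * (matQ (H.map Complex.ofReal) k₁ l₁ * matQ (H.map Complex.ofReal) k₂ l₂) ∈
            Set.range (fun p : Fin n × Fin n => matQ (H.map Complex.ofReal) p.1 p.2) := by
  constructor
  · intro k l
    ext j m
    simp only [hadamardPow, matQ, Matrix.of_apply, Matrix.map_apply]
    split
    · rcases hEnt j l with h | h <;> simp [h] <;> norm_num
    · simp
  · intro k₁ l₁ k₂ l₂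
    have hprod : matQ (H.map Complex.ofReal) k₁ l₁ * matQ (H.map Complex.ofReal) k₂ l₂ =
        Matrix.of (fun j m => if m = j + (k₁ + k₂) then
          ((H j l₁ : ℝ) : ℂ) * ((H (j + k₁) l₂ : ℝ) : ℂ) else 0) := by
      ext j m
      simp only [matQ, Matrix.mul_apply, Matrix.of_apply, Matrix.map_apply, ite_mul, zero_mul,
        mul_ite, mul_zero]
      rw [Finset.sum_eq_single (j + k₁)]
      · simp [add_assoc]
      · intro b _ hb
        simp [hb]
      · simp
    refine ⟨Matrix.diagonal (fun j => ((H (j + k₁) l₂ : ℝ) : ℂ)), Matrix.isDiag_diagonal _, ?_, ?_⟩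
    · rw [Matrix.diagonal_pow]
      convert Matrix.diagonal_one using 2
      funext j
      rcases hEnt (j + k₁) l₂ with h | h <;> simp [h] <;> norm_num
    · refine ⟨(k₁ + k₂, l₁), ?_⟩
      rw [hprod]
      ext j m
      simp only [matQ, Matrix.diagonal_mul, Matrix.of_apply, Matrix.map_apply, mul_ite, mul_zero]
      split
      · rcases hEnt (j + k₁) l₂ with h | h <;> push_cast [h] <;> ring
      · rfl
end

section
/- Suppose there exists an n×n Hadamard matrix, i.e., a matrix H all of whose entries lie in {1, −1} with Hᵀ·H = n·I. Then there exists a set G of n² pairwise orthogonal (with respect to ⟨A, M⟩ := Tr(A M†)) invertible n×n complex matrices that spans M_n(ℂ), such that every A ∈ G satisfies A^{⋆3} = A (entrywise cube), and for all A, B ∈ G there exists a diagonal matrix D with D² = I and D·(A·B) ∈ G. -/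
open Matrix Complex

/-- `G` is a `2`-pseudo-closed complete orthogonal basis of full-rank `n × n` matrices:
`n²` pairwise orthogonal invertible matrices spanning `Mₙ(ℂ)`, each fixed by the entrywise
cube, and such that any product of two members lies in `G` after multiplication by a
diagonal matrix `D` with `D² = I`. -/
def IsTwoPseudoClosedBasis {n : ℕ} (G : Finset (Matrix (Fin n) (Fin n) ℂ)) : Prop :=
  G.card = n ^ 2 ∧
    (∀ A ∈ G, ∀ B ∈ G, A ≠ B → minner A B = 0) ∧
    Submodule.span ℂ (G : Set (Matrix (Fin n) (Fin n) ℂ)) = ⊤ ∧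
    (∀ A ∈ G, IsUnit A) ∧
    (∀ A ∈ G, hadamardPow A 3 = A) ∧
    ∀ A ∈ G, ∀ B ∈ G, ∃ D : Matrix (Fin n) (Fin n) ℂ,
      D.IsDiag ∧ D ^ 2 = 1 ∧ D * (A * B) ∈ G

namespace HadamardAux

variable {n : ℕ}

/-- The "shift-and-multiply" matrices: row `a` of `Hc` placed along the `b`-shifted
diagonal. -/
def B (Hc : Matrix (Fin n) (Fin n) ℂ) (a b : Fin n) : Matrix (Fin n) (Fin n) ℂ :=
  Matrix.of fun k l => if l = k + b then Hc a k else 0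

lemma sq_one (Hc : Matrix (Fin n) (Fin n) ℂ)
    (hent : ∀ i j, Hc i j = 1 ∨ Hc i j = -1) (i j : Fin n) : Hc i j * Hc i j = 1 := by
  rcases hent i j with h | h <;> rw [h] <;> ring

lemma star_ent (Hc : Matrix (Fin n) (Fin n) ℂ)
    (hent : ∀ i j, Hc i j = 1 ∨ Hc i j = -1) (i j : Fin n) : star (Hc i j) = Hc i j := by
  rcases hent i j with h | h <;> simp [h]

lemma minner_B [NeZero n] (Hc : Matrix (Fin n) (Fin n) ℂ)
    (hent : ∀ i j, Hc i j = 1 ∨ Hc i j = -1) (a b a' b' : Fin n) :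
    minner (B Hc a b) (B Hc a' b') =
      (if b = b' then (∑ k, Hc a k * Hc a' k) else 0) := by
  unfold minner B
  rw [Matrix.trace]
  simp only [Matrix.diag, Matrix.mul_apply, Matrix.conjTranspose_apply, Matrix.of_apply]
  by_cases hb : b = b'
  · subst hb
    rw [if_pos rfl]
    refine Finset.sum_congr rfl fun y _ => ?_
    rw [Finset.sum_eq_single (y + b)]
    · simp [star_ent Hc hent]
    · intro x _ hx
      rw [if_neg hx, zero_mul]
    · simp
  · rw [if_neg hb]
    refine Finset.sum_eq_zero fun k _ => Finset.sum_eq_zero fun m _ => ?_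
    split_ifs with h1 h2
    · exact absurd (add_left_cancel (h1.symm.trans h2 : k + b = k + b')) hb
    · simp
    · simp
    · simp

lemma B_mul_conjTranspose [NeZero n] (Hc : Matrix (Fin n) (Fin n) ℂ)
    (hent : ∀ i j, Hc i j = 1 ∨ Hc i j = -1) (a b : Fin n) :
    B Hc a b * (B Hc a b).conjTranspose = 1 := by
  ext k k'
  simp only [Matrix.mul_apply, Matrix.conjTranspose_apply, B, Matrix.of_apply]
  rw [Finset.sum_eq_single (k + b)]
  · rw [if_pos rfl]
    by_cases hk : k = k'
    · subst hk
      simp [star_ent Hc hent, sq_one Hc hent]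
    · rw [if_neg (fun h => hk (add_right_cancel h)), star_zero, mul_zero,
        Matrix.one_apply_ne hk]
  · intro x _ hx
    rw [if_neg hx, zero_mul]
  · simp

lemma D_mul_B_mul_B [NeZero n] (Hc : Matrix (Fin n) (Fin n) ℂ)
    (hent : ∀ i j, Hc i j = 1 ∨ Hc i j = -1) (a b a' b' : Fin n) :
    Matrix.diagonal (fun k => Hc a' (k + b)) * (B Hc a b * B Hc a' b') =
      B Hc a (b + b') := by
  ext k l
  rw [Matrix.diagonal_mul]
  simp only [Matrix.mul_apply, B, Matrix.of_apply]
  rw [Finset.sum_eq_single (k + b)]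
  · rw [if_pos rfl]
    by_cases hl : l = k + (b + b')
    · rw [if_pos (by rw [hl, add_assoc]), if_pos hl, mul_comm (Hc a k), ← mul_assoc,
        sq_one Hc hent, one_mul]
    · rw [if_neg (fun h => hl (by rw [h, add_assoc])), if_neg hl, mul_zero, mul_zero]
  · intro x _ hx
    rw [if_neg hx, zero_mul]
  · simp

lemma stdBasis_eq [NeZero n] (Hc : Matrix (Fin n) (Fin n) ℂ)
    (hcol : ∀ k m, (∑ a, Hc a k * Hc a m) = if k = m then (n : ℂ) else 0)
    (k l : Fin n) :
    Matrix.single k l (1 : ℂ) = (n : ℂ)⁻¹ • ∑ a, Hc a k • B Hc a (l - k) := by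
  have hn : (n : ℂ) ≠ 0 := Nat.cast_ne_zero.mpr (NeZero.ne n)
  ext m m'
  simp only [Matrix.smul_apply, Matrix.sum_apply, B, Matrix.of_apply, smul_eq_mul,
    Matrix.single, Matrix.of_apply]
  by_cases hm' : m' = m + (l - k)
  · simp only [if_pos hm']
    rw [hcol k m]
    by_cases hk : k = m
    · subst hk
      rw [if_pos rfl, inv_mul_cancel₀ hn, if_pos ⟨rfl, by rw [hm']; abel⟩]
    · rw [if_neg hk, mul_zero, if_neg (fun h => hk h.1)]
  · simp only [if_neg hm', mul_zero, Finset.sum_const_zero]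
    rw [if_neg (fun h => hm' (by rw [← h.2, h.1]; abel))]

end HadamardAux

open HadamardAux in
theorem hadamard_gives_pseudoClosedBasis (n : ℕ)
    (hH : ∃ H : Matrix (Fin n) (Fin n) ℝ,
      (∀ i j, H i j = 1 ∨ H i j = -1) ∧ H.transpose * H = (n : ℝ) • 1) :
    ∃ G : Finset (Matrix (Fin n) (Fin n) ℂ), IsTwoPseudoClosedBasis G := by
  obtain ⟨H, hent0, horth⟩ := hH
  rcases Nat.eq_zero_or_pos n with hn0 | hn0
  · subst hn0
    refine ⟨∅, by simp, by simp, ?_, by simp, by simp, by simp⟩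
    rw [Finset.coe_empty, Submodule.span_empty, eq_comm, Submodule.eq_bot_iff]
    intro x _
    funext i
    exact i.elim0
  haveI : NeZero n := ⟨hn0.ne'⟩
  have hnR : (n : ℝ) ≠ 0 := Nat.cast_ne_zero.mpr hn0.ne'
  have hnC : (n : ℂ) ≠ 0 := Nat.cast_ne_zero.mpr hn0.ne'
  set Hc : Matrix (Fin n) (Fin n) ℂ := H.map (fun x => (x : ℂ)) with hHc
  have hent : ∀ i j, Hc i j = 1 ∨ Hc i j = -1 := by
    intro i j
    rcases hent0 i j with h | h <;> simp [hHc, Matrix.map_apply, h]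
  have hinv : H.transpose * ((n : ℝ)⁻¹ • H) = 1 := by
    rw [Matrix.mul_smul, horth, smul_smul, inv_mul_cancel₀ hnR, one_smul]
  have hinv' := mul_eq_one_comm.mp hinv
  have HHt : H * H.transpose = (n : ℝ) • 1 := by
    rw [Matrix.smul_mul] at hinv'
    calc H * H.transpose = (n : ℝ) • ((n : ℝ)⁻¹ • (H * H.transpose)) := by
          rw [smul_smul, mul_inv_cancel₀ hnR, one_smul]
      _ = (n : ℝ) • 1 := by rw [hinv']
  have hcol : ∀ k m, (∑ a, Hc a k * Hc a m) = if k = m then (n : ℂ) else 0 := by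
    intro k m
    have h1 : (∑ a, H a k * H a m) = if k = m then (n : ℝ) else 0 := by
      have := congrFun (congrFun horth k) m
      simpa [Matrix.mul_apply, Matrix.transpose_apply, Matrix.smul_apply, Matrix.one_apply,
        mul_ite, mul_one, mul_zero] using this
    have h2 : ((∑ a, H a k * H a m : ℝ) : ℂ) = ∑ a, Hc a k * Hc a m := by
      push_cast [hHc, Matrix.map_apply]
      rfl
    rw [← h2, h1]
    split_ifs <;> simp
  have hrow : ∀ a a', (∑ k, Hc a k * Hc a' k) = if a = a' then (n : ℂ) else 0 := by
    intro a a'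
    have h1 : (∑ k, H a k * H a' k) = if a = a' then (n : ℝ) else 0 := by
      have := congrFun (congrFun HHt a) a'
      simpa [Matrix.mul_apply, Matrix.transpose_apply, Matrix.smul_apply, Matrix.one_apply,
        mul_ite, mul_one, mul_zero] using this
    have h2 : ((∑ k, H a k * H a' k : ℝ) : ℂ) = ∑ k, Hc a k * Hc a' k := by
      push_cast [hHc, Matrix.map_apply]
      rfl
    rw [← h2, h1]
    split_ifs <;> simp
  refine ⟨Finset.image (fun p : Fin n × Fin n => B Hc p.1 p.2) Finset.univ, ?_, ?_, ?_, ?_, ?_, ?_⟩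
  · -- cardinality
    have hinj : Function.Injective (fun p : Fin n × Fin n => B Hc p.1 p.2) := by
      intro p q h
      simp only at h
      have e1 := minner_B Hc hent p.1 p.2 q.1 q.2
      rw [h] at e1
      have e2 := minner_B Hc hent q.1 q.2 q.1 q.2
      rw [if_pos rfl, hrow, if_pos rfl] at e2
      rw [e2] at e1
      by_cases h2 : p.2 = q.2
      · rw [if_pos h2, hrow] at e1
        by_cases h1 : p.1 = q.1
        · exact Prod.ext h1 h2
        · rw [if_neg h1] at e1; exact absurd e1 hnC
      · rw [if_neg h2] at e1; exact absurd e1 hnC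
    rw [Finset.card_image_of_injective _ hinj, Finset.card_univ, Fintype.card_prod,
      Fintype.card_fin, sq]
  · -- orthogonality
    intro A hA B' hB' hAB
    obtain ⟨p, -, rfl⟩ := Finset.mem_image.mp hA
    obtain ⟨q, -, rfl⟩ := Finset.mem_image.mp hB'
    rw [minner_B Hc hent]
    by_cases h2 : p.2 = q.2
    · rw [if_pos h2, hrow, if_neg (fun h1 => hAB (by rw [h1, h2]))]
    · rw [if_neg h2]
  · -- spanning
    rw [eq_top_iff]
    rintro M -
    rw [Matrix.matrix_eq_sum_single M]
    refine Submodule.sum_mem _ fun k _ => Submodule.sum_mem _ fun l _ => ?_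
    have hsm : Matrix.single k l (M k l) = M k l • Matrix.single k l (1 : ℂ) := by
      ext i j
      simp [Matrix.single, Matrix.smul_apply, mul_ite]
    rw [hsm, stdBasis_eq Hc hcol k l]
    refine Submodule.smul_mem _ _ (Submodule.smul_mem _ _
      (Submodule.sum_mem _ fun a _ => Submodule.smul_mem _ _ ?_))
    exact Submodule.subset_span (Finset.mem_coe.mpr
      (Finset.mem_image.mpr ⟨(a, l - k), Finset.mem_univ _, rfl⟩))
  · -- invertibility
    intro A hA
    obtain ⟨p, -, rfl⟩ := Finset.mem_image.mp hA
    have h := B_mul_conjTranspose Hc hent p.1 p.2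
    exact ⟨⟨_, _, h, mul_eq_one_comm.mp h⟩, rfl⟩
  · -- entrywise cube
    intro A hA
    obtain ⟨p, -, rfl⟩ := Finset.mem_image.mp hA
    ext i j
    simp only [hadamardPow, B, Matrix.of_apply]
    split_ifs
    · rcases hent p.1 i with h | h <;> rw [h] <;> ring
    · ring
  · -- pseudo-closure
    intro A hA B' hB'
    obtain ⟨p, -, rfl⟩ := Finset.mem_image.mp hA
    obtain ⟨q, -, rfl⟩ := Finset.mem_image.mp hB'
    refine ⟨Matrix.diagonal (fun k => Hc q.1 (k + p.2)), Matrix.isDiag_diagonal _, ?_, ?_⟩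
    · rw [pow_two, Matrix.diagonal_mul_diagonal]
      have : (fun k => Hc q.1 (k + p.2) * Hc q.1 (k + p.2)) = fun _ => (1 : ℂ) :=
        funext fun k => sq_one Hc hent _ _
      rw [this, Matrix.diagonal_one]
    · rw [D_mul_B_mul_B Hc hent]
      exact Finset.mem_image.mpr ⟨(p.1, p.2 + q.2), Finset.mem_univ _, rfl⟩
end
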